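/- arXiv:2105.03825 — 2 statements merged into one kernel-verified Lean document; each statement's English description precedes it below -/
import Mathlib

section
/- For all real $\nu$ with $9/32 \le \nu \le 23/32$, all $\beta$ with $1/2 \le \beta \le 1$, and all real $x$, one has $\cosh((2\nu-1)x) \le (1-\beta)\cosh(3x/8) + \beta\cosh(x/2)$. -/
/-!
Since `|2ν - 1| ≤ 7/16` and `7/16` is the mean of `3/8` and `1/2`, monotonicity of `cosh` in `|x|`
and the midpoint convexity `cosh ((a + b)/2) ≤ (cosh a + cosh b)/2` bound the left side by the
equal-weight mean of `cosh (3x/8) ≤ cosh (x/2)`; moving weight to the larger term only increases it.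
-/

open Real

theorem Real.cosh_add_cosh (a b : ℝ) :
    cosh a + cosh b = 2 * cosh ((a + b) / 2) * cosh ((a - b) / 2) := by
  have ha : a = (a + b) / 2 + (a - b) / 2 := by ring
  have hb : b = (a + b) / 2 - (a - b) / 2 := by ring
  rw [congrArg cosh ha, congrArg cosh hb, cosh_add, cosh_sub]
  ring

theorem Real.cosh_midpoint_le (a b : ℝ) : cosh ((a + b) / 2) ≤ (cosh a + cosh b) / 2 := by
  have hpos := cosh_pos ((a + b) / 2)
  have hone := one_le_cosh ((a - b) / 2)
  rw [cosh_add_cosh]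
  nlinarith

theorem Real.cosh_le_convex_comb {a b c β : ℝ} (hab : |a| ≤ |b|) (hc : |c| ≤ (|a| + |b|) / 2)
    (hβ : 1 / 2 ≤ β) : cosh c ≤ (1 - β) * cosh a + β * cosh b := by
  have hcosh_ab : cosh a ≤ cosh b := cosh_le_cosh.mpr hab
  have hmid : cosh c ≤ cosh ((|a| + |b|) / 2) :=
    cosh_le_cosh.mpr (hc.trans (le_abs_self _))
  calc cosh c ≤ (cosh |a| + cosh |b|) / 2 := hmid.trans (cosh_midpoint_le _ _)
    _ = (cosh a + cosh b) / 2 := by rw [cosh_abs, cosh_abs]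
    _ ≤ (1 - β) * cosh a + β * cosh b := by nlinarith

theorem stmt_5_general (ν β x : ℝ) (hν1 : 9/32 ≤ ν) (hν2 : ν ≤ 23/32)
    (hβ1 : 1/2 ≤ β) :
    Real.cosh ((2*ν - 1) * x) ≤ (1 - β) * Real.cosh (3*x/8) + β * Real.cosh (x / 2) := by
  have habs_left : |3 * x / 8| = 3 / 8 * |x| := by rw [abs_div, abs_mul]; norm_num; ring
  have habs_right : |x / 2| = 1 / 2 * |x| := by rw [abs_div]; norm_num; ring
  have hν : |2 * ν - 1| ≤ 7 / 16 := abs_le.mpr ⟨by linarith, by linarith⟩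
  refine cosh_le_convex_comb ?_ ?_ hβ1
  · rw [habs_left, habs_right]; linarith [abs_nonneg x]
  · rw [habs_left, habs_right, abs_mul]; nlinarith [abs_nonneg x]

theorem stmt_5 (ν β x : ℝ) (hν1 : 9/32 ≤ ν) (hν2 : ν ≤ 23/32)
    (hβ1 : 1/2 ≤ β) (hβ2 : β ≤ 1) :
    Real.cosh ((2*ν - 1) * x) ≤ (1 - β) * Real.cosh (3*x/8) + β * Real.cosh (x / 2) :=
  stmt_5_general ν β x hν1 hν2 hβ1
end

section
/- For $n \times n$ positive definite complex matrices $A, B$, any $X \in M_n(\mathbb{C})$, any $\nu$ with $1/4 \le \nu \le 3/4$, and any $\alpha \ge 1/2$, one has $\|\tfrac{1}{2}(A^\nu XB^{1-\nu}+A^{1-\nu}XB^\nu)\|_2 \le \|(1-\alpha)A^{1/2}XB^{1/2}+\tfrac{\alpha}{2}(AX+XB)\|_2$. -/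
/-!
Writing `A = U diag(a) U*`, `B = V diag(b) V*` and `Y = U* X V`, both sides become entrywise
(Schur) products of `Y` with the matrices of scalar Heinz means `h_ν(aᵢ, bⱼ)` and Heron means
`F_α(aᵢ, bⱼ)`. The Hilbert–Schmidt norm is unitarily invariant and monotone in the moduli of the
entries, so it suffices to compare the scalar means. For `a, b > 0`,
`h_ν(a, b) = √(ab) cosh ((ν - 1/2) log (a/b))` is increasing in `|ν - 1/2|`; hence, with
`y = log (a/b) / 4`, `h_ν ≤ h_{1/4} = √(ab) cosh y ≤ √(ab) cosh² y = (√(ab) + (a + b)/2) / 2`,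
which is `F_{1/2}`, and `F_α` increases with `α` because `√(ab) ≤ (a + b)/2`.
-/

open Matrix
open scoped ComplexOrder

/-- Real power of a Hermitian matrix via its spectral decomposition. -/
noncomputable def Matrix.IsHermitian.rpow {n : ℕ} {A : Matrix (Fin n) (Fin n) ℂ}
    (hA : A.IsHermitian) (ν : ℝ) : Matrix (Fin n) (Fin n) ℂ :=
  (hA.eigenvectorUnitary : Matrix (Fin n) (Fin n) ℂ) *
    Matrix.diagonal (fun i => ((hA.eigenvalues i ^ ν : ℝ) : ℂ)) *
      star (hA.eigenvectorUnitary : Matrix (Fin n) (Fin n) ℂ)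

/-- The Hilbert–Schmidt (Frobenius) norm of a complex matrix. -/
noncomputable def frobNorm {n : ℕ} (M : Matrix (Fin n) (Fin n) ℂ) : ℝ :=
  Real.sqrt (∑ i, ∑ j, ‖M i j‖ ^ 2)

open Real

noncomputable def heinzMean (a b ν : ℝ) : ℝ :=
  (a ^ ν * b ^ (1 - ν) + a ^ (1 - ν) * b ^ ν) / 2

noncomputable def heronMean (a b α : ℝ) : ℝ :=
  (1 - α) * (a ^ (1 / 2 : ℝ) * b ^ (1 / 2 : ℝ)) + α * ((a + b) / 2)

section HeinzMean

variable {a b : ℝ}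

lemma heinzMean_zero (a b : ℝ) : heinzMean a b 0 = (a + b) / 2 := by
  simp [heinzMean, add_comm]

lemma heinzMean_half (a b : ℝ) : heinzMean a b (1 / 2) = a ^ (1 / 2 : ℝ) * b ^ (1 / 2 : ℝ) := by
  norm_num [heinzMean]

lemma heinzMean_nonneg (ha : 0 ≤ a) (hb : 0 ≤ b) (ν : ℝ) : 0 ≤ heinzMean a b ν := by
  unfold heinzMean; positivity

lemma heinzMean_eq_mul_cosh (ha : 0 < a) (hb : 0 < b) (ν : ℝ) :
    heinzMean a b ν =
      a ^ (1 / 2 : ℝ) * b ^ (1 / 2 : ℝ) * cosh ((ν - 1 / 2) * (log a - log b)) := by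
  simp only [heinzMean, cosh_eq, rpow_def_of_pos ha, rpow_def_of_pos hb, ← exp_add, mul_add,
    mul_div_assoc']
  congr 3 <;> ring

lemma heinzMean_le_heinzMean (ha : 0 < a) (hb : 0 < b) {ν μ : ℝ}
    (h : |ν - 1 / 2| ≤ |μ - 1 / 2|) : heinzMean a b ν ≤ heinzMean a b μ := by
  rw [heinzMean_eq_mul_cosh ha hb, heinzMean_eq_mul_cosh ha hb]
  gcongr
  rw [cosh_le_cosh, abs_mul, abs_mul]
  gcongr

lemma heinzMean_quarter_le_heronMean_half (ha : 0 < a) (hb : 0 < b) :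
    heinzMean a b (1 / 4) ≤ heronMean a b (1 / 2) := by
  have hmean : heronMean a b (1 / 2) = (heinzMean a b (1 / 2) + heinzMean a b 0) / 2 := by
    rw [heronMean, heinzMean_half, heinzMean_zero]; ring
  have h0 : (0 - 1 / 2) * (log a - log b) = 2 * ((1 / 4 - 1 / 2) * (log a - log b)) := by ring
  rw [hmean, heinzMean_eq_mul_cosh ha hb, heinzMean_eq_mul_cosh ha hb,
    heinzMean_eq_mul_cosh ha hb, h0, sub_self, zero_mul, cosh_zero]
  set y := (1 / 4 - 1 / 2) * (log a - log b)
  have hcosh : cosh y ≤ (1 + cosh (2 * y)) / 2 := by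
    rw [cosh_two_mul, ← sub_nonneg]
    nlinarith [cosh_sq y, one_le_cosh y]
  have hg : 0 ≤ a ^ (1 / 2 : ℝ) * b ^ (1 / 2 : ℝ) := by positivity
  linarith [mul_le_mul_of_nonneg_left hcosh hg]

lemma heronMean_le_heronMean (ha : 0 < a) (hb : 0 < b) {α β : ℝ} (h : α ≤ β) :
    heronMean a b α ≤ heronMean a b β := by
  have hgm : a ^ (1 / 2 : ℝ) * b ^ (1 / 2 : ℝ) ≤ (a + b) / 2 := by
    rw [← heinzMean_half, ← heinzMean_zero]
    exact heinzMean_le_heinzMean ha hb (by norm_num)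
  unfold heronMean
  linarith [mul_le_mul_of_nonneg_left hgm (sub_nonneg.2 h)]

theorem heinzMean_le_heronMean (ha : 0 < a) (hb : 0 < b) {ν α : ℝ}
    (hν1 : 1 / 4 ≤ ν) (hν2 : ν ≤ 3 / 4) (hα : 1 / 2 ≤ α) :
    heinzMean a b ν ≤ heronMean a b α :=
  calc heinzMean a b ν ≤ heinzMean a b (1 / 4) :=
        heinzMean_le_heinzMean ha hb <| by
          rw [show |(1 / 4 : ℝ) - 1 / 2| = 1 / 4 by norm_num, abs_le]
          constructor <;> linarith
    _ ≤ heronMean a b (1 / 2) := heinzMean_quarter_le_heronMean_half ha hb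
    _ ≤ heronMean a b α := heronMean_le_heronMean ha hb hα

end HeinzMean

section FrobNorm

variable {n : ℕ}

lemma frobNorm_eq_sqrt_re_trace (M : Matrix (Fin n) (Fin n) ℂ) :
    frobNorm M = √(Mᴴ * M).trace.re := by
  rw [frobNorm, trace, Complex.re_sum, Finset.sum_comm]
  congr 1
  refine Finset.sum_congr rfl fun j _ => ?_
  simp only [diag_apply, mul_apply, conjTranspose_apply, Complex.re_sum, RCLike.star_def,
    Complex.conj_mul', ← Complex.ofReal_pow, Complex.ofReal_re]

lemma frobNorm_star_mul_mul {U V : Matrix (Fin n) (Fin n) ℂ} (hU : U ∈ unitaryGroup (Fin n) ℂ)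
    (hV : V ∈ unitaryGroup (Fin n) ℂ) (M : Matrix (Fin n) (Fin n) ℂ) :
    frobNorm (star U * M * V) = frobNorm M := by
  have hUU : U * star U = 1 := Unitary.mul_star_self_of_mem hU
  have hVV : V * star V = 1 := Unitary.mul_star_self_of_mem hV
  have hconj : (star U * M * V)ᴴ * (star U * M * V) = star V * (Mᴴ * M) * V := by
    simp only [← star_eq_conjTranspose, star_mul, star_star, Matrix.mul_assoc]
    rw [← Matrix.mul_assoc U, hUU, Matrix.one_mul]
  rw [frobNorm_eq_sqrt_re_trace, frobNorm_eq_sqrt_re_trace, hconj, trace_mul_cycle,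
    hVV, Matrix.one_mul]

lemma frobNorm_le_frobNorm {M N : Matrix (Fin n) (Fin n) ℂ} (h : ∀ i j, ‖M i j‖ ≤ ‖N i j‖) :
    frobNorm M ≤ frobNorm N := by
  unfold frobNorm
  gcongr with i _ j _
  exact h i j

end FrobNorm

namespace Matrix.IsHermitian

variable {n : ℕ} {A B : Matrix (Fin n) (Fin n) ℂ}

lemma rpow_one (hA : A.IsHermitian) : hA.rpow 1 = A := by
  conv_rhs => rw [hA.spectral_theorem, Unitary.conjStarAlgAut_apply]
  simp [rpow, Function.comp_def]

lemma rpow_zero (hA : A.IsHermitian) : hA.rpow 0 = 1 := by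
  simp [rpow, Unitary.mul_star_self_of_mem]

noncomputable def eigenCoords (hA : A.IsHermitian) (hB : B.IsHermitian)
    (M : Matrix (Fin n) (Fin n) ℂ) : Matrix (Fin n) (Fin n) ℂ :=
  star (hA.eigenvectorUnitary : Matrix (Fin n) (Fin n) ℂ) * M * hB.eigenvectorUnitary

variable (hA : A.IsHermitian) (hB : B.IsHermitian)

lemma frobNorm_le_frobNorm_of_eigenCoords {M N : Matrix (Fin n) (Fin n) ℂ}
    (h : ∀ i j, ‖eigenCoords hA hB M i j‖ ≤ ‖eigenCoords hA hB N i j‖) :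
    frobNorm M ≤ frobNorm N := by
  have hU := hA.eigenvectorUnitary.2
  have hV := hB.eigenvectorUnitary.2
  rw [← frobNorm_star_mul_mul hU hV M, ← frobNorm_star_mul_mul hU hV N]
  exact frobNorm_le_frobNorm h

lemma eigenCoords_add (M N : Matrix (Fin n) (Fin n) ℂ) :
    eigenCoords hA hB (M + N) = eigenCoords hA hB M + eigenCoords hA hB N := by
  simp only [eigenCoords, Matrix.mul_add, Matrix.add_mul]

lemma eigenCoords_smul (c : ℂ) (M : Matrix (Fin n) (Fin n) ℂ) :
    eigenCoords hA hB (c • M) = c • eigenCoords hA hB M := by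
  simp only [eigenCoords, Matrix.mul_smul, Matrix.smul_mul]

lemma eigenCoords_rpow_mul_rpow_apply (s t : ℝ) (X : Matrix (Fin n) (Fin n) ℂ) (i j : Fin n) :
    eigenCoords hA hB (hA.rpow s * X * hB.rpow t) i j =
      ((hA.eigenvalues i ^ s * hB.eigenvalues j ^ t : ℝ) : ℂ) * eigenCoords hA hB X i j := by
  set U := (hA.eigenvectorUnitary : Matrix (Fin n) (Fin n) ℂ)
  set V := (hB.eigenvectorUnitary : Matrix (Fin n) (Fin n) ℂ)
  have hU : star U * U = 1 := Unitary.star_mul_self_of_mem hA.eigenvectorUnitary.2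
  have hV : star V * V = 1 := Unitary.star_mul_self_of_mem hB.eigenvectorUnitary.2
  have hcancel : ∀ D E : Matrix (Fin n) (Fin n) ℂ,
      star U * (U * D * star U * X * (V * E * star V)) * V =
        (star U * U) * D * (star U * X * V) * E * (star V * V) := by
    intro D E; simp only [Matrix.mul_assoc]
  rw [eigenCoords, eigenCoords, rpow, rpow, hcancel, hU, hV, Matrix.one_mul, Matrix.mul_one,
    mul_diagonal, diagonal_mul]
  push_cast
  ring

lemma eigenCoords_heinz_apply (ν : ℝ) (X : Matrix (Fin n) (Fin n) ℂ) (i j : Fin n) :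
    eigenCoords hA hB ((1 / 2 : ℂ) •
        (hA.rpow ν * X * hB.rpow (1 - ν) + hA.rpow (1 - ν) * X * hB.rpow ν)) i j =
      (heinzMean (hA.eigenvalues i) (hB.eigenvalues j) ν : ℂ) * eigenCoords hA hB X i j := by
  simp only [eigenCoords_smul, eigenCoords_add, smul_apply, add_apply,
    eigenCoords_rpow_mul_rpow_apply, heinzMean, smul_eq_mul]
  push_cast
  ring

lemma eigenCoords_heron_apply (α : ℝ) (X : Matrix (Fin n) (Fin n) ℂ) (i j : Fin n) :
    eigenCoords hA hB (((1 - α : ℝ) : ℂ) • (hA.rpow (1 / 2) * X * hB.rpow (1 / 2)) +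
        ((α / 2 : ℝ) : ℂ) • (A * X + X * B)) i j =
      (heronMean (hA.eigenvalues i) (hB.eigenvalues j) α : ℂ) * eigenCoords hA hB X i j := by
  have hAX : A * X = hA.rpow 1 * X * hB.rpow 0 := by
    rw [hA.rpow_one, hB.rpow_zero, Matrix.mul_one]
  have hXB : X * B = hA.rpow 0 * X * hB.rpow 1 := by
    rw [hA.rpow_zero, hB.rpow_one, Matrix.one_mul]
  simp only [hAX, hXB, eigenCoords_smul, eigenCoords_add, smul_apply, add_apply,
    eigenCoords_rpow_mul_rpow_apply, heronMean, smul_eq_mul, Real.rpow_zero, Real.rpow_one]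
  push_cast
  ring

end Matrix.IsHermitian

theorem stmt_14 {n : ℕ} (A B X : Matrix (Fin n) (Fin n) ℂ)
    (hA : A.PosDef) (hB : B.PosDef) (ν α : ℝ)
    (hν1 : 1/4 ≤ ν) (hν2 : ν ≤ 3/4) (hα : 1/2 ≤ α) :
    frobNorm ((1/2 : ℂ) •
        (hA.1.rpow ν * X * hB.1.rpow (1 - ν) + hA.1.rpow (1 - ν) * X * hB.1.rpow ν)) ≤
      frobNorm (((1 - α : ℝ) : ℂ) • (hA.1.rpow (1/2) * X * hB.1.rpow (1/2)) +
        ((α/2 : ℝ) : ℂ) • (A * X + X * B)) := by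
  refine hA.1.frobNorm_le_frobNorm_of_eigenCoords hB.1 fun i j => ?_
  rw [hA.1.eigenCoords_heinz_apply, hA.1.eigenCoords_heron_apply, norm_mul, norm_mul]
  have ha := hA.eigenvalues_pos i
  have hb := hB.eigenvalues_pos j
  have hmean := heinzMean_le_heronMean ha hb hν1 hν2 hα
  have hheinz := heinzMean_nonneg ha.le hb.le ν
  gcongr
  rw [Complex.norm_real, Complex.norm_real, Real.norm_of_nonneg hheinz,
    Real.norm_of_nonneg (hheinz.trans hmean)]
  exact hmean
end
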